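/- Let Φ: ℝⁿ → ℝⁿ be continuous and monotone: ⟨Φ(y₁) - Φ(y₂), y₁ - y₂⟩ ≤ 0 for all y₁, y₂ ∈ ℝⁿ. Then for any p ∈ ℝⁿ, the equation x = Φ(x + p) admits a unique solution x ∈ ℝⁿ. -/

import Mathlib

/-!
Write the equation as `f x = 0` with `f x = x - Φ (x + p)`; monotonicity of `Φ` makes `f`
strongly monotone, `‖x - y‖² ≤ ⟪f x - f y, x - y⟫`, which gives uniqueness at once and existence
by induction on the dimension. Given a unit vector `v` with orthogonal hyperplane `K`, the slice of
`f` through `t • v`, projected onto `K`, is strongly monotone on `K`, so by induction it has a zero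
`x t`; it depends continuously on `t` because strong monotonicity makes inverses 1-Lipschitz.
The remaining coordinate `t ↦ ⟪f (x t + t • v), v⟫` is a strongly monotone continuous function
on `ℝ`, hence vanishes somewhere by the intermediate value theorem.
-/

open scoped RealInnerProductSpace
open Filter Function Module Topology

universe u

variable {E : Type u} [NormedAddCommGroup E] [InnerProductSpace ℝ E]

def StronglyMonotone (f : E → E) : Prop :=
  ∀ x y, ‖x - y‖ ^ 2 ≤ ⟪f x - f y, x - y⟫

namespace StronglyMonotone

variable {f : E → E}

theorem norm_sub_le (hf : StronglyMonotone f) (x y : E) : ‖x - y‖ ≤ ‖f x - f y‖ := by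
  have h := (hf x y).trans (real_inner_le_norm _ _)
  rcases (norm_nonneg (x - y)).eq_or_lt with h0 | h0
  · rw [← h0]; exact norm_nonneg _
  · nlinarith

theorem injective (hf : StronglyMonotone f) : Injective f := fun x y hxy => by
  simpa [hxy, sub_eq_zero] using hf.norm_sub_le x y

theorem orthogonalProjectionOnto_comp_add (hf : StronglyMonotone f) (K : Submodule ℝ E)
    [K.HasOrthogonalProjection] (a : E) :
    StronglyMonotone fun y : K => K.orthogonalProjectionOnto (f (y + a)) := fun y z => by
  rw [← map_sub, Submodule.inner_orthogonalProjectionOnto_eq_of_mem_right, ← Submodule.norm_coe]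
  simpa using hf (y + a) (z + a)

theorem continuous_of_apply_eq {T : Type*} [TopologicalSpace T] {g : T → E → E}
    (hg : Continuous (uncurry g)) (hgm : ∀ t, StronglyMonotone (g t)) {x : T → E} {c : E}
    (hx : ∀ t, g t (x t) = c) : Continuous x := by
  refine continuous_iff_continuousAt.2 fun s => tendsto_iff_norm_sub_tendsto_zero.2 ?_
  have hbound : ∀ t, ‖x t - x s‖ ≤ ‖g s (x s) - g t (x s)‖ := fun t => by
    simpa [hx] using (hgm t).norm_sub_le (x t) (x s)
  have hlim : Tendsto (fun t => ‖g s (x s) - g t (x s)‖) (𝓝 s) (𝓝 0) := by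
    have : Continuous fun t => ‖g s (x s) - g t (x s)‖ := by fun_prop
    simpa using this.tendsto s
  exact squeeze_zero (fun _ => norm_nonneg _) hbound hlim

theorem surjective_of_real {φ : ℝ → ℝ} (hφ : StronglyMonotone φ)
    (hc : Continuous φ) : Surjective φ := by
  have hgrowth : ∀ s t, s ≤ t → t - s ≤ φ t - φ s := fun s t hst => by
    have h := hφ t s
    simp only [Real.norm_eq_abs, sq_abs, RCLike.inner_apply, conj_trivial] at h
    rcases hst.eq_or_lt with rfl | hlt
    · simp
    · nlinarith
  refine hc.surjective ?_ ?_
  · refine tendsto_atTop_mono' _ ?_ (tendsto_atTop_add_const_left _ (φ 0) tendsto_id)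
    filter_upwards [eventually_ge_atTop 0] with t ht
    show φ 0 + t ≤ φ t
    linarith [hgrowth 0 t ht]
  · refine tendsto_atBot_mono' _ ?_ (tendsto_atBot_add_const_left _ (φ 0) tendsto_id)
    filter_upwards [eventually_le_atBot 0] with t ht
    show φ t ≤ φ 0 + t
    linarith [hgrowth t 0 ht]

theorem sq_sub_le_of_orthogonalProjectionOnto_eq (hf : StronglyMonotone f) {K : Submodule ℝ E}
    [K.HasOrthogonalProjection] {v : E} (hvK : v ∈ Kᗮ) (hv : ‖v‖ = 1) {y z : K} {s t : ℝ}
    (h : K.orthogonalProjectionOnto (f (y + s • v)) = K.orthogonalProjectionOnto (f (z + t • v))) :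
    (s - t) ^ 2 ≤ (⟪f (y + s • v), v⟫ - ⟪f (z + t • v), v⟫) * (s - t) := by
  have hdiff : (y + s • v) - (z + t • v) = ((y - z : K) : E) + (s - t) • v := by
    simp only [Submodule.coe_sub]; module
  have hperp : ⟪((y - z : K) : E), (s - t) • v⟫ = 0 :=
    Submodule.inner_right_of_mem_orthogonal (y - z).2 (Kᗮ.smul_mem _ hvK)
  have hnorm : (s - t) ^ 2 ≤ ‖(y + s • v) - (z + t • v)‖ ^ 2 := by
    rw [hdiff, norm_add_sq_real, hperp, norm_smul, hv, mul_one, Real.norm_eq_abs, sq_abs]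
    linarith [sq_nonneg ‖((y - z : K) : E)‖]
  have hinner : ⟪f (y + s • v) - f (z + t • v), (y + s • v) - (z + t • v)⟫
      = (⟪f (y + s • v), v⟫ - ⟪f (z + t • v), v⟫) * (s - t) := by
    rw [hdiff, inner_add_right, ← Submodule.inner_orthogonalProjectionOnto_eq_of_mem_right,
      map_sub, h, sub_self, inner_zero_left, zero_add, inner_smul_right, inner_sub_left, mul_comm]
  exact hnorm.trans ((hf _ _).trans hinner.le)

theorem surjective_of_orthogonal_singleton [CompleteSpace E] (hf : StronglyMonotone f)
    (hc : Continuous f) {v : E} (hv : ‖v‖ = 1)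
    (hK : ∀ g : (ℝ ∙ v)ᗮ → (ℝ ∙ v)ᗮ, StronglyMonotone g → Continuous g → Surjective g) :
    Surjective f := by
  set K := (ℝ ∙ v)ᗮ
  have hvK : v ∈ Kᗮ :=
    Submodule.le_orthogonal_orthogonal _ (Submodule.mem_span_singleton_self v)
  intro b
  have hslice (t : ℝ) : ∃ y : K, K.orthogonalProjectionOnto (f (y + t • v)) =
      K.orthogonalProjectionOnto b :=
    hK _ (hf.orthogonalProjectionOnto_comp_add K _) (by fun_prop) _
  choose x hx using hslice
  have hxc : Continuous x :=
    continuous_of_apply_eq (g := fun t y => K.orthogonalProjectionOnto (f (y + t • v)))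
      (by fun_prop) (fun _ => hf.orthogonalProjectionOnto_comp_add K _) hx
  set φ : ℝ → ℝ := fun t => ⟪f (x t + t • v), v⟫
  have hφ : StronglyMonotone φ := fun s t => by
    simpa [φ, mul_comm] using
      hf.sq_sub_le_of_orthogonalProjectionOnto_eq hvK hv ((hx s).trans (hx t).symm)
  obtain ⟨t, ht⟩ := hφ.surjective_of_real (by fun_prop) ⟪b, v⟫
  refine ⟨x t + t • v, sub_eq_zero.1 ?_⟩
  have hperp : f (x t + t • v) - b ∈ Kᗮ :=
    (K.orthogonalProjectionOnto_eq_zero_iff).1 (by rw [map_sub, hx t, sub_self])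
  have hmem : f (x t + t • v) - b ∈ K :=
    Submodule.mem_orthogonal_singleton_iff_inner_left.2 (by rwa [inner_sub_left, sub_eq_zero])
  exact Submodule.disjoint_def.1 K.orthogonal_disjoint _ hmem hperp

theorem surjective_of_finrank_eq (n : ℕ) :
    ∀ {F : Type u} [NormedAddCommGroup F] [InnerProductSpace ℝ F] [FiniteDimensional ℝ F],
      finrank ℝ F = n → ∀ {g : F → F}, StronglyMonotone g → Continuous g → Surjective g := by
  induction n with
  | zero =>
    intro F _ _ _ hF g _ _ b
    have : Subsingleton F := finrank_zero_iff.1 hF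
    exact ⟨b, Subsingleton.elim _ _⟩
  | succ n ih =>
    intro F _ _ _ hF g hg hc
    have : Fact (finrank ℝ F = n + 1) := ⟨hF⟩
    have : Nontrivial F := finrank_pos_iff (R := ℝ) |>.1 (by omega)
    obtain ⟨v, hv⟩ := exists_norm_eq F zero_le_one
    have hv0 : v ≠ 0 := norm_ne_zero_iff.1 (hv ▸ one_ne_zero)
    exact hg.surjective_of_orthogonal_singleton hc hv fun _ hk hkc =>
      ih (Submodule.finrank_orthogonal_span_singleton hv0) hk hkc

theorem bijective [FiniteDimensional ℝ E] (hf : StronglyMonotone f) (hc : Continuous f) :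
    Bijective f :=
  ⟨hf.injective, surjective_of_finrank_eq _ rfl hf hc⟩

end StronglyMonotone

theorem stronglyMonotone_id_sub {Φ : E → E} (hΦ : ∀ y z, ⟪Φ y - Φ z, y - z⟫ ≤ 0) :
    StronglyMonotone fun x => x - Φ x := fun y z => by
  rw [sub_sub_sub_comm, inner_sub_left, real_inner_self_eq_norm_sq]
  linarith [hΦ y z]

theorem stmt_4 (n : ℕ) (Φ : EuclideanSpace ℝ (Fin n) → EuclideanSpace ℝ (Fin n))
    (hcont : Continuous Φ)
    (hMono : ∀ y₁ y₂, (inner ℝ (Φ y₁ - Φ y₂) (y₁ - y₂) : ℝ) ≤ 0)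
    (p : EuclideanSpace ℝ (Fin n)) :
    ∃! x : EuclideanSpace ℝ (Fin n), x = Φ (x + p) := by
  have hMono_p : ∀ y z, ⟪Φ (y + p) - Φ (z + p), y - z⟫ ≤ 0 := fun y z => by
    simpa using hMono (y + p) (z + p)
  have hbij := (stronglyMonotone_id_sub hMono_p).bijective (by fun_prop)
  simpa only [sub_eq_zero] using hbij.existsUnique 0
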